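/- arXiv:1302.4716 — 5 statements merged into one kernel-verified Lean document; each statement's English description precedes it below -/
import Mathlib

section
/- Let L be a negative definite lattice with basis E_1,...,E_s with nonnegative off-diagonal pairings, l' ∈ L⊗Q, and J* ⊆ {1,...,s}. If x_1 and x_2 both satisfy (x_n + l', E_j) ≤ 0 for all j ∈ J*, then the componentwise minimum x = min{x_1, x_2} also satisfies (x + l', E_j) ≤ 0 for all j ∈ J*. -/
open Classical

noncomputable section

def castQ {s : ℕ} (x : Fin s → ℤ) : Fin s → ℚ := fun i => (x i : ℚ)

def pairQ {s : ℕ} (B : Matrix (Fin s) (Fin s) ℤ) (x y : Fin s → ℚ) : ℚ :=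
  ∑ i, ∑ j, x i * (B i j : ℚ) * y j

def pairZ {s : ℕ} (B : Matrix (Fin s) (Fin s) ℤ) (x y : Fin s → ℤ) : ℤ :=
  ∑ i, ∑ j, x i * B i j * y j

def pq {s : ℕ} (B : Matrix (Fin s) (Fin s) ℤ) (v : Fin s → ℚ) (j : Fin s) : ℚ :=
  ∑ i, v i * (B i j : ℚ)

def chi {s : ℕ} (B : Matrix (Fin s) (Fin s) ℤ) (k : Fin s → ℚ) (l : Fin s → ℤ) : ℚ :=
  -(pairQ B (castQ l) (castQ l + k)) / 2

def NegDef {s : ℕ} (B : Matrix (Fin s) (Fin s) ℤ) : Prop :=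
  ∀ x : Fin s → ℚ, x ≠ 0 → pairQ B x x < 0

def plumbGraph {s : ℕ} (B : Matrix (Fin s) (Fin s) ℤ) : SimpleGraph (Fin s) :=
  SimpleGraph.fromRel (fun i j => 0 < B i j)

def Plumbing {s : ℕ} (B : Matrix (Fin s) (Fin s) ℤ) : Prop :=
  B.IsSymm ∧ NegDef B ∧ (∀ i j, i ≠ j → B i j = 0 ∨ B i j = 1) ∧
    (plumbGraph B).Connected ∧ (plumbGraph B).IsAcyclic

def IsCanonical {s : ℕ} (B : Matrix (Fin s) (Fin s) ℤ) (k : Fin s → ℚ) : Prop :=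
  ∀ j, pq B k j = -(B j j : ℚ) - 2

def RationalMat {s : ℕ} (B : Matrix (Fin s) (Fin s) ℤ) : Prop :=
  ∀ kc : Fin s → ℚ, IsCanonical B kc →
    ∀ l : Fin s → ℤ, (∀ t, 0 ≤ l t) → l ≠ 0 → 0 < chi B kc l

def HasBadSet {s : ℕ} (B : Matrix (Fin s) (Fin s) ℤ) (Jb : Finset (Fin s)) : Prop :=
  ∃ B' : Matrix (Fin s) (Fin s) ℤ, (∀ i j, i ≠ j → B' i j = B i j) ∧
    (∀ j, j ∉ Jb → B' j j = B j j) ∧ (∀ j ∈ Jb, B' j j ≤ B j j) ∧ RationalMat B'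

def MinClassRep {s : ℕ} (B : Matrix (Fin s) (Fin s) ℤ) (l' : Fin s → ℚ) : Prop :=
  (∀ i, 0 ≤ l' i) ∧ (∀ j, pq B l' j ≤ 0) ∧
    ∀ y : Fin s → ℤ, (∀ j, pq B (l' + castQ y) j ≤ 0) → ∀ i, 0 ≤ y i

def IsXcycle {s : ℕ} (B : Matrix (Fin s) (Fin s) ℤ) (l' : Fin s → ℚ) (Jb : Finset (Fin s))
    (i : Fin s → ℕ) (x : Fin s → ℤ) : Prop :=
  (∀ j ∈ Jb, x j = i j) ∧ (∀ j, j ∉ Jb → pq B (l' + castQ x) j ≤ 0) ∧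
    ∀ y : Fin s → ℤ, (∀ j ∈ Jb, y j = i j) → (∀ j, j ∉ Jb → pq B (l' + castQ y) j ≤ 0) →
      ∀ t, x t ≤ y t

def krep {s : ℕ} (kcan l' : Fin s → ℚ) : Fin s → ℚ := fun j => kcan j + 2 * l' j

lemma pq_le_pq_of_le_of_eq {s : ℕ} {B : Matrix (Fin s) (Fin s) ℤ}
    (hoff : ∀ i j : Fin s, i ≠ j → 0 ≤ B i j) {v w : Fin s → ℚ} {j : Fin s}
    (hle : ∀ i, i ≠ j → v i ≤ w i) (heq : v j = w j) : pq B v j ≤ pq B w j := by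
  refine Finset.sum_le_sum fun i _ => ?_
  by_cases hij : i = j
  · rw [hij, heq]
  · exact mul_le_mul_of_nonneg_right (hle i hij) (by exact_mod_cast hoff i j hij)

lemma pq_add_castQ_min_le {s : ℕ} {B : Matrix (Fin s) (Fin s) ℤ}
    (hoff : ∀ i j : Fin s, i ≠ j → 0 ≤ B i j) (l' : Fin s → ℚ) {x1 x2 : Fin s → ℤ} {j : Fin s}
    (hx : x1 j ≤ x2 j) :
    pq B (l' + castQ (fun i => min (x1 i) (x2 i))) j ≤ pq B (l' + castQ x1) j :=
  pq_le_pq_of_le_of_eq hoff (fun i _ => by simp [castQ]) (by simp [castQ, hx])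

theorem stmt2_general (s : ℕ) (B : Matrix (Fin s) (Fin s) ℤ)
    (hoff : ∀ i j : Fin s, i ≠ j → 0 ≤ B i j)
    (l' : Fin s → ℚ) (Jstar : Finset (Fin s))
    (x1 x2 : Fin s → ℤ)
    (h1 : ∀ j ∈ Jstar, pq B (l' + castQ x1) j ≤ 0)
    (h2 : ∀ j ∈ Jstar, pq B (l' + castQ x2) j ≤ 0) :
    ∀ j ∈ Jstar, pq B (l' + castQ (fun i => min (x1 i) (x2 i))) j ≤ 0 := by
  intro j hj
  rcases le_total (x1 j) (x2 j) with h | h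
  · exact (pq_add_castQ_min_le hoff l' h).trans (h1 j hj)
  · simp_rw [min_comm (x1 _)]
    exact (pq_add_castQ_min_le hoff l' h).trans (h2 j hj)

/-- the componentwise minimum of two cycles satisfying the anti-nef
inequalities on `J*` again satisfies them. -/
theorem stmt2 (s : ℕ) (B : Matrix (Fin s) (Fin s) ℤ)
    (hsymm : B.IsSymm) (hneg : NegDef B)
    (hoff : ∀ i j : Fin s, i ≠ j → 0 ≤ B i j)
    (l' : Fin s → ℚ) (Jstar : Finset (Fin s))
    (x1 x2 : Fin s → ℤ)
    (h1 : ∀ j ∈ Jstar, pq B (l' + castQ x1) j ≤ 0)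
    (h2 : ∀ j ∈ Jstar, pq B (l' + castQ x2) j ≤ 0) :
    ∀ j ∈ Jstar, pq B (l' + castQ (fun i => min (x1 i) (x2 i))) j ≤ 0 :=
  stmt2_general s B hoff l' Jstar x1 x2 h1 h2
end
end

section
/- Fix a connected negative definite plumbing lattice L with basis {E_j}, a class representative l' ∈ L' with l' ≥ 0 and (l', E_j) ≤ 0 for all j (l' minimal in its class intersected with the anti-nef cone), a subset of distinguished vertices J̄ with complement J*, and i ∈ (Z≥0)^{J̄}. Then there exists a unique minimal cycle x(i) ∈ L such that: (a) the J̄-coefficients of x(i) equal i; (b) (x(i) + l', E_j) ≤ 0 for all j ∈ J*. Moreover x(0) = 0, x(i) ≥ 0, and x(i) + E_Ī ≤ x(i + 1_Ī) for every subset Ī ⊆ J̄, where E_Ī = Σ_{j∈Ī} E_j and 1_Ī is the corresponding 0-1 vector. -/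
open Classical

noncomputable section

/-!
Since the off-diagonal entries of `B` are nonnegative, `(y + l', E_j)` can only grow when `y`
grows away from `j`. Hence the cycles satisfying (a) and (b) are closed under coordinatewise
minimum, and applying the minimality of `l'` to `min y 0` shows they are nonnegative. A nonempty,
inf-closed, bounded-below set of integer vectors has a least element (one of least coordinate
sum), which is `x(i)`. Nonemptiness comes from negative definiteness: the form restricted to `J*`
is nondegenerate, which yields an integer `z` supported on `J*` with `(z, E_j) < 0` on `J*`, and
large multiples of `z` enforce (b). Finally `x(i + 1_Ī) - E_Ī` satisfies (a) and (b) for `i`,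
and `0` satisfies them for `i = 0`.
-/

open Finset Matrix

section Pairing

variable {s : ℕ} {B : Matrix (Fin s) (Fin s) ℤ}

theorem Plumbing.offDiag_nonneg (hB : Plumbing B) {a b : Fin s} (hab : a ≠ b) : 0 ≤ B a b := by
  rcases hB.2.2.1 a b hab with h | h <;> simp [h]

theorem pq_le_pq_of_le (hoff : ∀ a b, a ≠ b → 0 ≤ B a b) {u v : Fin s → ℚ} {j : Fin s}
    (huv : u ≤ v) (hj : u j = v j) : pq B u j ≤ pq B v j := by
  refine sum_le_sum fun t _ => ?_
  rcases eq_or_ne t j with rfl | htj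
  · rw [hj]
  · exact mul_le_mul_of_nonneg_right (huv t) (Int.cast_nonneg (hoff t j htj))

theorem pq_add_castQ_le_of_le (hoff : ∀ a b, a ≠ b → 0 ≤ B a b) (l' : Fin s → ℚ)
    {x y : Fin s → ℤ} {j : Fin s} (hxy : x ≤ y) (hj : x j = y j) :
    pq B (l' + castQ x) j ≤ pq B (l' + castQ y) j :=
  pq_le_pq_of_le hoff (fun t => add_le_add_right (Int.cast_le.mpr (hxy t)) (l' t))
    (by simp [castQ, hj])

@[simp] theorem castQ_zero : castQ (0 : Fin s → ℤ) = 0 := by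
  ext; simp [castQ]

theorem pq_add_castQ (u : Fin s → ℚ) (x : Fin s → ℤ) (j : Fin s) :
    pq B (u + castQ x) j = pq B u j + ((x ᵥ* B) j : ℤ) := by
  simp [pq, castQ, vecMul, dotProduct, add_mul, sum_add_distrib]

theorem pairQ_castQ (x y : Fin s → ℤ) : pairQ B (castQ x) (castQ y) = ((x ᵥ* B ⬝ᵥ y : ℤ) : ℚ) := by
  simp only [pairQ, castQ, vecMul, dotProduct, sum_mul]
  push_cast
  exact sum_comm

end Pairing

section Candidates

variable {s : ℕ} {B : Matrix (Fin s) (Fin s) ℤ} {l' : Fin s → ℚ} {Jb : Finset (Fin s)}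
  {i : Fin s → ℕ}

def IsXcycleCandidate (B : Matrix (Fin s) (Fin s) ℤ) (l' : Fin s → ℚ) (Jb : Finset (Fin s))
    (i : Fin s → ℕ) (y : Fin s → ℤ) : Prop :=
  (∀ j ∈ Jb, y j = i j) ∧ ∀ j ∉ Jb, pq B (l' + castQ y) j ≤ 0

theorem isXcycle_iff_isLeast {x : Fin s → ℤ} :
    IsXcycle B l' Jb i x ↔ IsLeast {y | IsXcycleCandidate B l' Jb i y} x :=
  ⟨fun ⟨ha, hb, hmin⟩ => ⟨⟨ha, hb⟩, fun _ hy => hmin _ hy.1 hy.2⟩,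
    fun ⟨⟨ha, hb⟩, hmin⟩ => ⟨ha, hb, fun _ hya hyb => hmin ⟨hya, hyb⟩⟩⟩

theorem isXcycleCandidate_zero (hl' : MinClassRep B l') : IsXcycleCandidate B l' Jb 0 0 :=
  ⟨fun _ _ => rfl, fun j _ => by simpa using hl'.2.1 j⟩

theorem infClosed_isXcycleCandidate (hoff : ∀ a b, a ≠ b → 0 ≤ B a b) :
    InfClosed {y | IsXcycleCandidate B l' Jb i y} := by
  intro x hx y hy
  refine ⟨fun j hj => by simp [hx.1 j hj, hy.1 j hj], fun j hj => ?_⟩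
  rcases min_choice (x j) (y j) with h | h
  · exact (pq_add_castQ_le_of_le hoff l' inf_le_left h).trans (hx.2 j hj)
  · exact (pq_add_castQ_le_of_le hoff l' inf_le_right h).trans (hy.2 j hj)

theorem IsXcycleCandidate.nonneg (hoff : ∀ a b, a ≠ b → 0 ≤ B a b) (hl' : MinClassRep B l')
    {y : Fin s → ℤ} (hy : IsXcycleCandidate B l' Jb i y) : 0 ≤ y := by
  suffices hz : ∀ j, pq B (l' + castQ (y ⊓ 0)) j ≤ 0 from
    fun t => le_min_iff.mp (hl'.2.2 _ hz t) |>.1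
  intro j
  by_cases hzj : (y ⊓ 0) j = (0 : Fin s → ℤ) j
  · have h := pq_add_castQ_le_of_le hoff l' inf_le_right hzj
    rw [castQ_zero, add_zero] at h
    exact h.trans (hl'.2.1 j)
  · have hyj : (y ⊓ 0) j = y j := (min_choice (y j) 0).resolve_right hzj
    have hj : j ∉ Jb := fun hj => hzj (by simp [hy.1 j hj])
    exact (pq_add_castQ_le_of_le hoff l' inf_le_left hyj).trans (hy.2 j hj)

theorem IsXcycleCandidate.sub_indicator (hoff : ∀ a b, a ≠ b → 0 ≤ B a b) {I : Finset (Fin s)}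
    (hI : I ⊆ Jb) {x : Fin s → ℤ}
    (hx : IsXcycleCandidate B l' Jb (fun j => i j + if j ∈ I then 1 else 0) x) :
    IsXcycleCandidate B l' Jb i (x - fun j => if j ∈ I then 1 else 0) := by
  refine ⟨fun j hj => by simp [hx.1 j hj], fun j hj => ?_⟩
  have hjI : j ∉ I := fun h => hj (hI h)
  refine (pq_add_castQ_le_of_le hoff l' (fun t => ?_) (by simp [hjI])).trans (hx.2 j hj)
  simp only [Pi.sub_apply]
  split_ifs <;> simp

end Candidates

theorem exists_isLeast_of_infClosed {ι : Type*} [Fintype ι] {S : Set (ι → ℤ)}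
    (hne : S.Nonempty) (hinf : InfClosed S) (hbdd : BddBelow S) : ∃ x, IsLeast S x := by
  obtain ⟨b, hb⟩ := hbdd
  obtain ⟨-, ⟨x, hxS, rfl⟩, hleast⟩ := Int.exists_least_of_bdd
    (P := fun n => ∃ y ∈ S, ∑ t, y t = n)
    ⟨∑ t, b t, by rintro _ ⟨y, hy, rfl⟩; exact sum_le_sum fun t _ => hb hy t⟩
    (let ⟨y, hy⟩ := hne; ⟨_, y, hy, rfl⟩)
  refine ⟨x, hxS, fun y hy => inf_eq_left.mp ?_⟩
  have hsum : ∑ t, (x ⊓ y) t = ∑ t, x t :=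
    le_antisymm (sum_le_sum fun t _ => inf_le_left) (hleast _ ⟨_, hinf hxS hy, rfl⟩)
  funext t
  exact (sum_eq_sum_iff_of_le fun t _ => inf_le_left).mp hsum t (mem_univ t)

section PaddedMatrix

variable {s : ℕ} (B : Matrix (Fin s) (Fin s) ℤ) (J : Finset (Fin s))

def padMatrix : Matrix (Fin s) (Fin s) ℤ :=
  Matrix.of fun a b => if a ∈ J ∨ b ∈ J then (if a = b then 1 else 0) else B a b

variable {B J}

theorem vecMul_padMatrix_of_mem (v : Fin s → ℤ) {a : Fin s} (ha : a ∈ J) :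
    (v ᵥ* padMatrix B J) a = v a := by
  simp [vecMul, dotProduct, padMatrix, ha]

theorem vecMul_padMatrix_of_notMem {v : Fin s → ℤ} (hv : ∀ b ∈ J, v b = 0) {a : Fin s}
    (ha : a ∉ J) : (v ᵥ* padMatrix B J) a = (v ᵥ* B) a := by
  simp only [vecMul, dotProduct]
  refine sum_congr rfl fun b _ => ?_
  by_cases hb : b ∈ J
  · simp [hv b hb]
  · simp [padMatrix, ha, hb]

theorem det_padMatrix_ne_zero (hneg : NegDef B) : (padMatrix B J).det ≠ 0 := by
  intro hdet
  obtain ⟨v, hv0, hv⟩ := exists_vecMul_eq_zero_iff.mpr hdet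
  have hvJ : ∀ b ∈ J, v b = 0 := fun b hb => by
    simpa [vecMul_padMatrix_of_mem v hb] using congrFun hv b
  have hvB : ∀ a ∉ J, (v ᵥ* B) a = 0 := fun a ha => by
    simpa [vecMul_padMatrix_of_notMem hvJ ha] using congrFun hv a
  have hcast : castQ v ≠ 0 := fun h => hv0 (funext fun t => by simpa [castQ] using congrFun h t)
  have hzero : v ᵥ* B ⬝ᵥ v = 0 := sum_eq_zero fun a _ => by
    by_cases ha : a ∈ J
    · simp [hvJ a ha]
    · simp [hvB a ha]
  have := hneg _ hcast
  rw [pairQ_castQ, hzero, Int.cast_zero] at this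
  exact lt_irrefl _ this

end PaddedMatrix

/-- Since `c ᵥ* adjugate M * M = det M • c`, the choice `c = -det M` off `J` makes
`z ᵥ* M = -(det M)²` there, while the rows of the identity force `z = 0` on `J`. -/
theorem exists_vecMul_le_neg_one {s : ℕ} {B : Matrix (Fin s) (Fin s) ℤ} (hneg : NegDef B)
    (J : Finset (Fin s)) : ∃ z : Fin s → ℤ, (∀ j ∈ J, z j = 0) ∧ ∀ j ∉ J, (z ᵥ* B) j ≤ -1 := by
  let M := padMatrix B J
  have hd : M.det ≠ 0 := det_padMatrix_ne_zero hneg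
  let c : Fin s → ℤ := fun a => if a ∈ J then 0 else -M.det
  obtain ⟨z, hz⟩ : ∃ z, z ᵥ* M = M.det • c :=
    ⟨c ᵥ* M.adjugate, by rw [vecMul_vecMul, adjugate_mul, vecMul_smul, vecMul_one]⟩
  have hzJ : ∀ j ∈ J, z j = 0 := fun j hj => by
    simpa [M, vecMul_padMatrix_of_mem z hj, c, hj] using congrFun hz j
  refine ⟨z, hzJ, fun j hj => ?_⟩
  rw [← vecMul_padMatrix_of_notMem hzJ hj, hz]
  simp only [Pi.smul_apply, c, hj, if_false, smul_eq_mul]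
  nlinarith [mul_self_pos.mpr hd]

theorem exists_isXcycleCandidate {s : ℕ} {B : Matrix (Fin s) (Fin s) ℤ} (hneg : NegDef B)
    (l' : Fin s → ℚ) (Jb : Finset (Fin s)) (i : Fin s → ℕ) :
    ∃ y, IsXcycleCandidate B l' Jb i y := by
  obtain ⟨z, hzJ, hzB⟩ := exists_vecMul_le_neg_one hneg Jb
  let y₀ : Fin s → ℤ := fun t => if t ∈ Jb then (i t : ℤ) else 0
  obtain ⟨m, hm⟩ := Finite.exists_le fun j => pq B (l' + castQ y₀) j
  obtain ⟨n, hn⟩ := exists_nat_ge m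
  refine ⟨y₀ + (n : ℤ) • z, fun j hj => by simp [y₀, hj, hzJ j hj], fun j hj => ?_⟩
  have hzj : (((z ᵥ* B) j : ℤ) : ℚ) ≤ -1 := by exact_mod_cast hzB j hj
  calc pq B (l' + castQ (y₀ + (n : ℤ) • z)) j
      = pq B (l' + castQ y₀) j + n * (((z ᵥ* B) j : ℤ) : ℚ) := by
        rw [pq_add_castQ, pq_add_castQ, add_vecMul, smul_vecMul]
        push_cast [Pi.add_apply, Pi.smul_apply, smul_eq_mul]
        ring
    _ ≤ n + n * (-1) := by gcongr; exact (hm j).trans hn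
    _ = 0 := by ring

theorem exists_isXcycle {s : ℕ} {B : Matrix (Fin s) (Fin s) ℤ} (hB : Plumbing B)
    {l' : Fin s → ℚ} (hl' : MinClassRep B l') (Jb : Finset (Fin s)) (i : Fin s → ℕ) :
    ∃ x, IsXcycle B l' Jb i x := by
  simp only [isXcycle_iff_isLeast]
  exact exists_isLeast_of_infClosed (exists_isXcycleCandidate hB.2.1 l' Jb i)
    (infClosed_isXcycleCandidate fun _ _ => hB.offDiag_nonneg)
    ⟨0, fun _ hy => hy.nonneg (fun _ _ => hB.offDiag_nonneg) hl'⟩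

/-- existence and uniqueness of the universal cycles `x(i)`. -/
theorem stmt3 (s : ℕ) (B : Matrix (Fin s) (Fin s) ℤ) (hB : Plumbing B)
    (l' : Fin s → ℚ) (hl' : MinClassRep B l')
    (Jb : Finset (Fin s)) :
    ∃ X : (Fin s → ℕ) → (Fin s → ℤ),
      (∀ i, IsXcycle B l' Jb i (X i)) ∧
      (∀ i x, IsXcycle B l' Jb i x → x = X i) ∧
      X 0 = 0 ∧
      (∀ i t, 0 ≤ X i t) ∧
      (∀ (i : Fin s → ℕ) (I : Finset (Fin s)), I ⊆ Jb → ∀ t,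
        X i t + (if t ∈ I then 1 else 0) ≤
          X (fun j => i j + (if j ∈ I then 1 else 0)) t) := by
  have hoff : ∀ a b, a ≠ b → 0 ≤ B a b := fun _ _ => hB.offDiag_nonneg
  choose X hX using exists_isXcycle hB hl' Jb
  have hleast : ∀ i, IsLeast {y | IsXcycleCandidate B l' Jb i y} (X i) :=
    fun i => isXcycle_iff_isLeast.mp (hX i)
  have hnonneg : ∀ i, 0 ≤ X i := fun i => (hleast i).1.nonneg hoff hl'
  refine ⟨X, hX, fun i x hx => (isXcycle_iff_isLeast.mp hx).unique (hleast i),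
    le_antisymm ((hleast 0).2 (isXcycleCandidate_zero hl')) (hnonneg 0), hnonneg,
    fun i I hI t => ?_⟩
  have h := (hleast i).2 ((hleast _).1.sub_indicator hoff hI) t
  simp only [Pi.sub_apply] at h
  linarith

end
end

section
/- Let G be a rational connected negative definite graph (χ_can(l) > 0 for all effective nonzero l), and let l* > 0 be an effective cycle. Then there exists a vertex j ∈ |l*| (the support of l*) such that (E_j, l* - E_j) ≤ 1. -/
open Classical

noncomputable section

/-- on a rational graph, for every effective nonzero `l*` some vertex
`j` of its support satisfies `(E_j, l* - E_j) ≤ 1`. -/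
theorem stmt8 (s : ℕ) (B : Matrix (Fin s) (Fin s) ℤ) (hB : Plumbing B)
    (kcan : Fin s → ℚ) (hk : IsCanonical B kcan)
    (hrat : ∀ l : Fin s → ℤ, (∀ t, 0 ≤ l t) → l ≠ 0 → 0 < chi B kcan l)
    (l : Fin s → ℤ) (hl : ∀ t, 0 ≤ l t) (hne : l ≠ 0) :
    ∃ j, l j ≠ 0 ∧ pairZ B (Pi.single j 1) (l - Pi.single j 1) ≤ 1 := by
  by_contra h
  push_neg at h
  have hsym : ∀ i j, B i j = B j i := fun i j => (hB.1.apply j i)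
  -- for each j in the support, row sum bound
  have hrow : ∀ j, l j ≠ 0 → (B j j : ℤ) + 2 ≤ ∑ k, B j k * l k := by
    intro j hj
    have h1 := h j hj
    have hpz : pairZ B (Pi.single j 1) (l - Pi.single j 1)
        = (∑ k, B j k * l k) - B j j := by
      unfold pairZ
      rw [Finset.sum_eq_single j]
      · simp [Finset.sum_sub_distrib, Pi.single_apply, mul_sub, mul_ite, Finset.sum_ite_eq']
      · intro b _ hb
        simp [Pi.single_apply, hb]
      · simp
    omega
  have hchi := hrat l hl hne
  have key : 0 ≤ pairQ B (castQ l) (castQ l + kcan) := by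
    unfold pairQ
    apply Finset.sum_nonneg
    intro i _
    rcases eq_or_ne (l i) 0 with h0 | h0
    · apply Finset.sum_nonneg
      intro j _
      simp [castQ, h0]
    · have hS2 : ∑ t, (B i t : ℚ) * kcan t = -(B i i : ℚ) - 2 := by
        have := hk i
        unfold pq at this
        rw [← this]
        apply Finset.sum_congr rfl
        intro t _
        rw [hsym i t]; ring
      have hS1 : (B i i : ℚ) + 2 ≤ ∑ t, (B i t : ℚ) * (l t : ℚ) := by
        have := hrow i h0
        have : ((B i i + 2 : ℤ) : ℚ) ≤ ((∑ k, B i k * l k : ℤ) : ℚ) :=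
          Int.cast_le.mpr this
        simpa using this
      have hsum : (∑ j, castQ l i * (B i j : ℚ) * (castQ l + kcan) j)
          = (l i : ℚ) * ((∑ t, (B i t : ℚ) * (l t : ℚ)) + ∑ t, (B i t : ℚ) * kcan t) := by
        rw [← Finset.sum_add_distrib, Finset.mul_sum]
        apply Finset.sum_congr rfl
        intro t _
        simp [castQ]; ring
      rw [hsum]
      apply mul_nonneg
      · exact_mod_cast hl i
      · rw [hS2]; linarith
  unfold chi at hchi
  linarith
end
end

section
/- Selection Procedure: Let G be a tree (no cycles) with vertex set J = J̄ ⊔ J*, adjacency pairing (E_i, E_j) ∈ {0,1} for i ≠ j, integer decorations σ_j, a subset Ĩ ⊆ J̄, supports S̃ ⊆ J* and disjoint families {G_α}_{α∈A} (connected components of S̃) and {C_β}_{β∈B} (connected components of some S \ S̃ ⊆ J*), satisfying σ_j(S̃) ≥ 0 for j ∈ J̃ and σ_j(S̃) ≤ 0 for j ∈ Ĩ \ J̃ (where σ_j(S) := σ_j - (E_j, E_S)). Then for any nonempty A' ⊆ A, B' ⊆ B with A' ∪ B' ≠ ∅, either there is α ∈ A' such that for every i ∈ G_α and every j ∈ J̃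 adjacent to i, σ_j((S̃ \ i) ∪ ∪_{β∈B'} C_β) > 0, or there is β ∈ B' such that for every i ∈ C_β and every j ∈ Ĩ \ J̃ adjacent to i, σ_j((S̃ ∪ i) \ ∪_{α∈A'} G_α) < 0. -/
open Classical

noncomputable section

/-- `σ_j(S) = σ_j - (E_j, E_S)` : the decoration minus the number of neighbours in `S`. -/
def sig {ι : Type} [Fintype ι] [DecidableEq ι] (G : SimpleGraph ι) [DecidableRel G.Adj]
    (σ : ι → ℤ) (j : ι) (S : Finset ι) : ℤ :=
  σ j - ((S.filter (fun i => G.Adj j i)).card : ℤ)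

/-!
If both alternatives fail, every component `G_α` with `α ∈ A'` has a neighbour `j ∈ J̃` which, since
`σ_j(S̃) ≥ 0`, must also be adjacent to some `C_β` with `β ∈ B'`; symmetrically every `C_β` with
`β ∈ B'` is joined through a vertex of `Ĩ \ J̃` to some `G_α` with `α ∈ A'`. Following these links
we eventually return to a component already visited. The rest of this closed route is a connected
set disjoint from that component and joined to it by two different edges, one at a `J̃`-vertex and
one at an `(Ĩ \ J̃)`-vertex. In a forest two disjoint connected vertex sets are joined by at most
one edge.
-/

open Function

theorem Function.exists_mem_periodicPts {α : Type*} [Finite α] [Nonempty α] (f : α → α) :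
    ∃ x, x ∈ periodicPts f := by
  obtain ⟨x⟩ := ‹Nonempty α›
  obtain ⟨m, n, hmn, heq⟩ := Finite.exists_ne_map_eq_of_infinite (f^[·] x)
  wlog hlt : m < n generalizing m n
  · exact this n m hmn.symm heq.symm (by omega)
  refine ⟨f^[m] x, mk_mem_periodicPts (Nat.sub_pos_of_lt hlt) ?_⟩
  rw [IsPeriodicPt, IsFixedPt, ← iterate_add_apply, Nat.sub_add_cancel hlt.le]
  exact heq.symm

theorem Pairwise.sumElim_disjoint {α β γ : Type*} [PartialOrder γ] [OrderBot γ] {f : α → γ}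
    {g : β → γ} (hf : Pairwise (Disjoint on f)) (hg : Pairwise (Disjoint on g))
    (hfg : ∀ a b, Disjoint (f a) (g b)) : Pairwise (Disjoint on Sum.elim f g) := by
  rintro (a | b) (a' | b') h
  · exact hf fun h' => h (congrArg _ h')
  · exact hfg a b'
  · exact (hfg a' b).symm
  · exact hg fun h' => h (congrArg _ h')

namespace SimpleGraph

variable {V : Type*} {G : SimpleGraph V}

theorem Preconnected.exists_walk_support_subset {s : Set V} (hs : (G.induce s).Preconnected)
    {u v : V} (hu : u ∈ s) (hv : v ∈ s) : ∃ p : G.Walk u v, ∀ z ∈ p.support, z ∈ s := by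
  obtain ⟨p⟩ := hs ⟨u, hu⟩ ⟨v, hv⟩
  let q : G.Walk u v := p.map (Embedding.induce s).toHom
  refine ⟨q, fun z hz => ?_⟩
  obtain ⟨⟨w, hw⟩, -, rfl⟩ := List.mem_map.1 (Walk.support_map _ p ▸ hz)
  exact hw

theorem IsAcyclic.eq_and_eq_of_adj_of_adj (hG : G.IsAcyclic) {s t : Set V} (hst : Disjoint s t)
    (hs : (G.induce s).Preconnected) (ht : (G.induce t).Preconnected) {a b u v : V}
    (ha : a ∈ s) (hb : b ∈ s) (hu : u ∈ t) (hv : v ∈ t) (hua : G.Adj u a) (hvb : G.Adj v b) :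
    u = v ∧ a = b := by
  obtain ⟨p, hp⟩ := ht.exists_walk_support_subset hu hv
  obtain ⟨q, hq⟩ := hs.exists_walk_support_subset hb ha
  -- the edge `u a` is a bridge, so it lies on the walk `u ⇝ v → b ⇝ a`
  have hbridge := isBridge_iff_forall_walk_mem_edges.1 (isAcyclic_iff_forall_adj_isBridge.1 hG hua)
    (p.append (.cons hvb q))
  rw [Walk.edges_append, Walk.edges_cons, List.mem_append, List.mem_cons] at hbridge
  rcases hbridge with hep | hevb | heq
  · exact (Set.disjoint_left.1 hst ha (hp a (p.snd_mem_support_of_mem_edges hep))).elim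
  · rcases Sym2.eq_iff.1 hevb with h | ⟨rfl, -⟩
    · exact h
    · exact (Set.disjoint_left.1 hst hb hu).elim
  · exact (Set.disjoint_left.1 hst (hq u (q.fst_mem_support_of_mem_edges heq)) hu).elim

section Linked

variable {X : Type*} (blob : X → Set V) (next : X → X) (link : X → V)

theorem exists_walk_link_iterate (hconn : ∀ x, (G.induce (blob x)).Preconnected)
    (hdisj : Pairwise (Disjoint on blob)) (hlink : ∀ x y, link x ∉ blob y)
    (hfrom : ∀ x, ∃ v ∈ blob x, G.Adj (link x) v)
    (hto : ∀ x, ∃ v ∈ blob (next x), G.Adj (link x) v) (y : X) :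
    ∀ n, (∀ k, 0 < k → k ≤ n → next^[k] y ≠ y) →
      ∃ p : G.Walk (link y) (link (next^[n] y)), ∀ z ∈ p.support, z ∉ blob y := by
  intro n
  induction n with
  | zero => exact fun _ => ⟨.nil, by simpa using hlink y y⟩
  | succ n ih =>
    intro hy
    set x := next^[n] y
    obtain ⟨p, hp⟩ := ih fun k hk hkn => hy k hk (by omega)
    have hx : next x ≠ y := iterate_succ_apply' next n y ▸ hy (n + 1) (by omega) le_rfl
    obtain ⟨v, hv, hxv⟩ := hto x
    obtain ⟨w, hw, hxw⟩ := hfrom (next x)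
    obtain ⟨q, hq⟩ := (hconn (next x)).exists_walk_support_subset hv hw
    rw [iterate_succ_apply']
    refine ⟨p.append (.cons hxv (q.concat hxw.symm)), fun z hz => ?_⟩
    simp only [Walk.mem_support_append_iff, Walk.support_cons, Walk.support_concat,
      List.mem_cons, List.mem_append, List.mem_nil_iff, or_false] at hz
    rcases hz with hz | rfl | hz | rfl
    · exact hp z hz
    · exact hlink x y
    · exact Set.disjoint_left.1 (hdisj hx) (hq z hz)
    · exact hlink (next x) y

theorem IsAcyclic.exists_link_next_eq [Finite X] [Nonempty X] (hG : G.IsAcyclic)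
    (hconn : ∀ x, (G.induce (blob x)).Preconnected)
    (hdisj : Pairwise (Disjoint on blob)) (hlink : ∀ x y, link x ∉ blob y)
    (hfrom : ∀ x, ∃ v ∈ blob x, G.Adj (link x) v)
    (hto : ∀ x, ∃ v ∈ blob (next x), G.Adj (link x) v) :
    ∃ x, link (next x) = link x := by
  -- Along a periodic orbit `y, next y, …, x, next x = y`, both `link y` and `link x` are adjacent to
  -- `blob y`, and they are joined by a walk through the other blobs of the orbit.
  obtain ⟨y, hy⟩ := exists_mem_periodicPts next
  set n := minimalPeriod next y - 1
  have hn : n + 1 = minimalPeriod next y :=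
    Nat.sub_add_cancel (minimalPeriod_pos_of_mem_periodicPts hy)
  set x := next^[n] y
  have hxy : next x = y := by
    have := hn ▸ isPeriodicPt_minimalPeriod next y
    rwa [IsPeriodicPt, IsFixedPt, iterate_succ_apply'] at this
  obtain ⟨p, hp⟩ := exists_walk_link_iterate blob next link hconn hdisj hlink hfrom hto y n
    fun k hk hkn => not_isPeriodicPt_of_pos_of_lt_minimalPeriod hk.ne' (by omega)
  obtain ⟨a, ha, hya⟩ := hfrom y
  obtain ⟨b, hb, hxb⟩ := hto x
  rw [hxy] at hb
  have := hG.eq_and_eq_of_adj_of_adj (Set.disjoint_left.2 fun z hz hzp => hp z hzp hz)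
    (hconn y) p.connected_induce_support.preconnected ha hb p.start_mem_support
    p.end_mem_support hya hxb
  exact ⟨x, by rw [hxy]; exact this.1⟩

theorem IsAcyclic.false_of_alternating_links {α β : Type*} [Finite α] [Finite β]
    [Nonempty (α ⊕ β)] (hG : G.IsAcyclic) (f : α → Set V) (g : β → Set V)
    (hf : ∀ a, (G.induce (f a)).Preconnected) (hg : ∀ b, (G.induce (g b)).Preconnected)
    (hfd : Pairwise (Disjoint on f)) (hgd : Pairwise (Disjoint on g))
    (hfg : ∀ a b, Disjoint (f a) (g b)) {W J₁ J₂ : Set V} (hfW : ∀ a, f a ⊆ W)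
    (hgW : ∀ b, g b ⊆ W) (hJ₁ : Disjoint J₁ W) (hJ₂ : Disjoint J₂ W) (hJ : Disjoint J₁ J₂)
    (hfg_link : ∀ a, ∃ j ∈ J₁, (∃ v ∈ f a, G.Adj j v) ∧ ∃ b, ∃ v ∈ g b, G.Adj j v)
    (hgf_link : ∀ b, ∃ j ∈ J₂, (∃ v ∈ g b, G.Adj j v) ∧ ∃ a, ∃ v ∈ f a, G.Adj j v) :
    False := by
  choose j₁ hj₁ hfrom₁ b₁ hto₁ using hfg_link
  choose j₂ hj₂ hfrom₂ a₂ hto₂ using hgf_link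
  have hlinkW : ∀ x, Sum.elim j₁ j₂ x ∉ W := by
    rintro (a | b)
    exacts [Set.disjoint_left.1 hJ₁ (hj₁ a), Set.disjoint_left.1 hJ₂ (hj₂ b)]
  have hblobW : ∀ x, Sum.elim f g x ⊆ W := by
    rintro (a | b)
    exacts [hfW a, hgW b]
  obtain ⟨a | b, h⟩ := hG.exists_link_next_eq (Sum.elim f g) (Sum.elim (.inr ∘ b₁) (.inl ∘ a₂))
    (Sum.elim j₁ j₂) (by rintro (a | b); exacts [hf a, hg b]) (hfd.sumElim_disjoint hgd hfg)
    (fun x y h => hlinkW x (hblobW y h)) (by rintro (a | b); exacts [hfrom₁ a, hfrom₂ b])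
    (by rintro (a | b); exacts [hto₁ a, hto₂ b])
  · exact Set.disjoint_left.1 hJ (hj₁ a) ((show j₂ (b₁ a) = j₁ a from h) ▸ hj₂ (b₁ a))
  · exact Set.disjoint_left.1 hJ (hj₁ (a₂ b)) ((show j₁ (a₂ b) = j₂ b from h) ▸ hj₂ b)

end Linked

end SimpleGraph

section sig

variable {ι : Type} [Fintype ι] [DecidableEq ι] {G : SimpleGraph ι} [DecidableRel G.Adj]
  {σ : ι → ℤ} {S T : Finset ι} {i j : ι}

theorem sig_erase_union_of_forall_not_adj (hi : i ∈ S) (hji : G.Adj j i)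
    (hT : ∀ t ∈ T, ¬ G.Adj j t) : sig G σ j (S.erase i ∪ T) = sig G σ j S + 1 := by
  have hi' : i ∈ S.filter (G.Adj j ·) := Finset.mem_filter.2 ⟨hi, hji⟩
  rw [sig, sig, Finset.filter_union, Finset.filter_eq_empty_iff.2 hT, Finset.union_empty,
    Finset.filter_erase, Finset.card_erase_of_mem hi', Nat.cast_sub (Finset.card_pos.2 ⟨i, hi'⟩)]
  ring

theorem sig_insert_sdiff_of_forall_not_adj (hi : i ∉ S) (hji : G.Adj j i)
    (hT : ∀ t ∈ T, ¬ G.Adj j t) : sig G σ j (insert i S \ T) = sig G σ j S - 1 := by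
  have : (insert i S \ T).filter (G.Adj j ·) = insert i (S.filter (G.Adj j ·)) := by
    ext z
    simp only [Finset.mem_filter, Finset.mem_sdiff, Finset.mem_insert]
    grind
  rw [sig, sig, this, Finset.card_insert_of_notMem (fun h => hi (Finset.mem_filter.1 h).1)]
  push_cast
  ring

theorem exists_adj_of_sig_erase_union_le (hi : i ∈ S) (hji : G.Adj j i)
    (h : sig G σ j (S.erase i ∪ T) ≤ sig G σ j S) : ∃ t ∈ T, G.Adj j t := by
  by_contra! hT
  rw [sig_erase_union_of_forall_not_adj hi hji hT] at h
  omega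

theorem exists_adj_of_sig_le_sig_insert_sdiff (hi : i ∉ S) (hji : G.Adj j i)
    (h : sig G σ j S ≤ sig G σ j (insert i S \ T)) : ∃ t ∈ T, G.Adj j t := by
  by_contra! hT
  rw [sig_insert_sdiff_of_forall_not_adj hi hji hT] at h
  omega

end sig

theorem stmt14_general (ι : Type) [Fintype ι] [DecidableEq ι]
    (G : SimpleGraph ι) [DecidableRel G.Adj] (htree : G.IsAcyclic)
    (Jb Jstar : Finset ι) (hpart : ∀ v, v ∈ Jb ↔ v ∉ Jstar)
    (σ : ι → ℤ)
    (Itil Jtil : Finset ι) (hJI : Jtil ⊆ Itil) (hIJb : Itil ⊆ Jb)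
    (Stil Sc : Finset ι) (hStil : Stil ⊆ Jstar) (hSc : Sc ⊆ Jstar)
    (hdisj : Disjoint Stil Sc)
    (A B : Type) [Fintype A] [Fintype B]
    (Gc : A → Finset ι) (Cc : B → Finset ι)
    -- `Gc` are the connected components of `S̃`:
    (hGu : Finset.univ.biUnion Gc = Stil)
    (hGconn : ∀ a, (G.induce ((Gc a : Set ι))).Connected)
    (hGdisj : ∀ a a', a ≠ a' → Disjoint (Gc a) (Gc a'))
    -- `Cc` are the connected components of `S \ S̃`:
    (hCu : Finset.univ.biUnion Cc = Sc)
    (hCconn : ∀ b, (G.induce ((Cc b : Set ι))).Connected)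
    (hCdisj : ∀ b b', b ≠ b' → Disjoint (Cc b) (Cc b'))
    -- hypotheses on the σ-values (Lemma 4.8(c)):
    (hsig1 : ∀ j ∈ Jtil, 0 ≤ sig G σ j Stil)
    (hsig2 : ∀ j ∈ Itil \ Jtil, sig G σ j Stil ≤ 0)
    (A' : Finset A) (B' : Finset B) (hne : A'.Nonempty ∨ B'.Nonempty) :
    (∃ a ∈ A', ∀ i ∈ Gc a, ∀ j ∈ Jtil, G.Adj j i →
        0 < sig G σ j ((Stil.erase i) ∪ B'.biUnion Cc)) ∨
    (∃ b ∈ B', ∀ i ∈ Cc b, ∀ j ∈ Itil \ Jtil, G.Adj j i →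
        sig G σ j ((insert i Stil) \ A'.biUnion Gc) < 0) := by
  have hGS (a : A) : Gc a ⊆ Stil := hGu ▸ Finset.subset_biUnion_of_mem Gc (Finset.mem_univ a)
  have hCS (b : B) : Cc b ⊆ Sc := hCu ▸ Finset.subset_biUnion_of_mem Cc (Finset.mem_univ b)
  have hJbJstar : Disjoint (Jb : Set ι) Jstar :=
    Finset.disjoint_coe.2 (Finset.disjoint_left.2 fun v hv => (hpart v).1 hv)
  have : Nonempty (A' ⊕ B') := by
    rcases hne with ⟨a, ha⟩ | ⟨b, hb⟩
    exacts [⟨.inl ⟨a, ha⟩⟩, ⟨.inr ⟨b, hb⟩⟩]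
  by_contra! ⟨hA, hB⟩
  refine htree.false_of_alternating_links (fun a : A' => (Gc a : Set ι)) (fun b : B' => Cc b)
    (fun a => (hGconn a).preconnected) (fun b => (hCconn b).preconnected)
    (fun a a' h => Finset.disjoint_coe.2 (hGdisj a a' (Subtype.coe_ne_coe.2 h)))
    (fun b b' h => Finset.disjoint_coe.2 (hCdisj b b' (Subtype.coe_ne_coe.2 h)))
    (fun a b => Finset.disjoint_coe.2 (hdisj.mono (hGS a) (hCS b)))
    (fun a => Finset.coe_subset.2 ((hGS a).trans hStil))
    (fun b => Finset.coe_subset.2 ((hCS b).trans hSc))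
    (hJbJstar.mono_left (Finset.coe_subset.2 (hJI.trans hIJb)))
    (hJbJstar.mono_left (Finset.coe_subset.2 (Finset.sdiff_subset.trans hIJb)))
    (Finset.disjoint_coe.2 Finset.disjoint_sdiff) ?_ ?_
  · rintro ⟨a, ha⟩
    obtain ⟨i, hi, j, hj, hji, hle⟩ := hA a ha
    obtain ⟨t, ht, hjt⟩ :=
      exists_adj_of_sig_erase_union_le (hGS a hi) hji (by linarith [hsig1 j hj])
    obtain ⟨b, hb, htb⟩ := Finset.mem_biUnion.1 ht
    exact ⟨j, hj, ⟨i, hi, hji⟩, ⟨b, hb⟩, t, htb, hjt⟩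
  · rintro ⟨b, hb⟩
    obtain ⟨i, hi, j, hj, hji, hle⟩ := hB b hb
    obtain ⟨t, ht, hjt⟩ := exists_adj_of_sig_le_sig_insert_sdiff
      (Finset.disjoint_right.1 hdisj (hCS b hi)) hji (by linarith [hsig2 j hj])
    obtain ⟨a, ha, hta⟩ := Finset.mem_biUnion.1 ht
    exact ⟨j, hj, ⟨i, hi, hji⟩, ⟨a, ha⟩, t, hta, hjt⟩

/-- the Selection Procedure (Proposition 4.9). -/
theorem stmt14 (ι : Type) [Fintype ι] [DecidableEq ι]
    (G : SimpleGraph ι) [DecidableRel G.Adj] (htree : G.IsAcyclic)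
    (Jb Jstar : Finset ι) (hpart : ∀ v, v ∈ Jb ↔ v ∉ Jstar)
    (hnoadj : ∀ i ∈ Jb, ∀ j ∈ Jb, ¬ G.Adj i j)
    (σ : ι → ℤ)
    (Itil Jtil : Finset ι) (hJI : Jtil ⊆ Itil) (hIJb : Itil ⊆ Jb)
    (Stil Sc : Finset ι) (hStil : Stil ⊆ Jstar) (hSc : Sc ⊆ Jstar)
    (hdisj : Disjoint Stil Sc)
    (A B : Type) [Fintype A] [DecidableEq A] [Fintype B] [DecidableEq B]
    (Gc : A → Finset ι) (Cc : B → Finset ι)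
    -- `Gc` are the connected components of `S̃`:
    (hGu : Finset.univ.biUnion Gc = Stil)
    (hGne : ∀ a, (Gc a).Nonempty)
    (hGconn : ∀ a, (G.induce ((Gc a : Set ι))).Connected)
    (hGdisj : ∀ a a', a ≠ a' → Disjoint (Gc a) (Gc a'))
    (hGsep : ∀ a a', a ≠ a' → ∀ i ∈ Gc a, ∀ i' ∈ Gc a', ¬ G.Adj i i')
    -- `Cc` are the connected components of `S \ S̃`:
    (hCu : Finset.univ.biUnion Cc = Sc)
    (hCne : ∀ b, (Cc b).Nonempty)
    (hCconn : ∀ b, (G.induce ((Cc b : Set ι))).Connected)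
    (hCdisj : ∀ b b', b ≠ b' → Disjoint (Cc b) (Cc b'))
    (hCsep : ∀ b b', b ≠ b' → ∀ i ∈ Cc b, ∀ i' ∈ Cc b', ¬ G.Adj i i')
    -- hypotheses on the σ-values (Lemma 4.8(c)):
    (hsig1 : ∀ j ∈ Jtil, 0 ≤ sig G σ j Stil)
    (hsig2 : ∀ j ∈ Itil \ Jtil, sig G σ j Stil ≤ 0)
    (A' : Finset A) (B' : Finset B) (hne : A'.Nonempty ∨ B'.Nonempty) :
    (∃ a ∈ A', ∀ i ∈ Gc a, ∀ j ∈ Jtil, G.Adj j i →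
        0 < sig G σ j ((Stil.erase i) ∪ B'.biUnion Cc)) ∨
    (∃ b ∈ B', ∀ i ∈ Cc b, ∀ j ∈ Itil \ Jtil, G.Adj j i →
        sig G σ j ((insert i Stil) \ A'.biUnion Gc) < 0) :=
  stmt14_general ι G htree Jb Jstar hpart σ Itil Jtil hJI hIJb Stil Sc hStil hSc hdisj A B Gc Cc hGu
    hGconn hGdisj hCu hCconn hCdisj hsig1 hsig2 A' B' hne
end
end

section
/- For the distinguished representative l'_{[k]} and universal cycles x(i): if l ∈ L and l + l'_{[k]} lies in the anti-nef cone S', then with i = φ(l) (the projection of l onto the bad-vertex coordinates), x(i) + l'_{[k]} also lies in S'. Consequently w̄(i + 1_j) > w̄(i) for every bad vertex j, where w̄(i) = χ_{k_r}(x(i)). -/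
open Classical

noncomputable section

lemma pq_add {s : ℕ} (B : Matrix (Fin s) (Fin s) ℤ) (a b : Fin s → ℚ) (j : Fin s) :
    pq B (a + b) j = pq B a j + pq B b j := by
  simp [pq, add_mul, Finset.sum_add_distrib]

lemma pq_castQ {s : ℕ} (B : Matrix (Fin s) (Fin s) ℤ) (v : Fin s → ℤ) (j : Fin s) :
    pq B (castQ v) j = ∑ t, (v t : ℚ) * (B t j : ℚ) := rfl

lemma pairQ_eq_sum_pq {s : ℕ} (B : Matrix (Fin s) (Fin s) ℤ) (x y : Fin s → ℚ) :
    pairQ B x y = ∑ j, pq B x j * y j := by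
  rw [pairQ, Finset.sum_comm]
  simp [pq, Finset.sum_mul]

lemma pairQ_symm' {s : ℕ} {B : Matrix (Fin s) (Fin s) ℤ} (hs : ∀ a b, B a b = B b a)
    (x y : Fin s → ℚ) : pairQ B x y = pairQ B y x := by
  rw [pairQ, Finset.sum_comm, pairQ]
  refine Finset.sum_congr rfl fun a _ => Finset.sum_congr rfl fun b _ => ?_
  rw [hs b a]; ring

lemma pairQ_add_left {s : ℕ} (B : Matrix (Fin s) (Fin s) ℤ) (x y z : Fin s → ℚ) :
    pairQ B (x + y) z = pairQ B x z + pairQ B y z := by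
  simp [pairQ, add_mul, Finset.sum_add_distrib]

lemma pairQ_add_right {s : ℕ} (B : Matrix (Fin s) (Fin s) ℤ) (x y z : Fin s → ℚ) :
    pairQ B x (y + z) = pairQ B x y + pairQ B x z := by
  simp [pairQ, mul_add, Finset.sum_add_distrib]

lemma pairQ_smul_right {s : ℕ} (B : Matrix (Fin s) (Fin s) ℤ) (c : ℚ) (x y : Fin s → ℚ) :
    pairQ B x (fun j => c * y j) = c * pairQ B x y := by
  simp only [pairQ, Finset.mul_sum]
  refine Finset.sum_congr rfl fun a _ => Finset.sum_congr rfl fun b _ => by ring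

lemma castQ_add {s : ℕ} (x y : Fin s → ℤ) : castQ (x + y) = castQ x + castQ y := by
  funext t; simp [castQ]

lemma chi_step {s : ℕ} {B : Matrix (Fin s) (Fin s) ℤ} (hs : ∀ a b, B a b = B b a)
    (k : Fin s → ℚ) (x w : Fin s → ℤ) :
    chi B k (x + w) = chi B k x
      - (pairQ B (castQ w) (castQ w) + pairQ B (castQ w) k) / 2
      - pairQ B (castQ x) (castQ w) := by
  simp only [chi, castQ_add, pairQ_add_left, pairQ_add_right]
  rw [pairQ_symm' hs (castQ w) (castQ x)]
  ring

lemma exists_canonical {s : ℕ} (B : Matrix (Fin s) (Fin s) ℤ) (hnd : NegDef B) :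
    ∃ kc : Fin s → ℚ, IsCanonical B kc := by
  set M : Matrix (Fin s) (Fin s) ℚ := B.map (Int.cast : ℤ → ℚ) with hM
  have hdet : M.det ≠ 0 := by
    intro hdet
    obtain ⟨v, hv0, hmv⟩ := Matrix.exists_mulVec_eq_zero_iff.mpr hdet
    have : pairQ B v v = 0 := by
      have : pairQ B v v = dotProduct v (M.mulVec v) := by
        simp only [pairQ, dotProduct, Matrix.mulVec, dotProduct,
          Finset.mul_sum, hM, Matrix.map_apply]
        refine Finset.sum_congr rfl fun a _ => Finset.sum_congr rfl fun b _ => by ring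
      rw [this, hmv]
      simp
    have := hnd v hv0
    linarith
  set c : Fin s → ℚ := fun j => -(B j j : ℚ) - 2 with hc
  refine ⟨Matrix.vecMul c M⁻¹, fun j => ?_⟩
  have h1 : Matrix.vecMul (Matrix.vecMul c M⁻¹) M = c := by
    rw [Matrix.vecMul_vecMul, Matrix.nonsing_inv_mul M (isUnit_iff_ne_zero.mpr hdet),
      Matrix.vecMul_one]
  have h2 : pq B (Matrix.vecMul c M⁻¹) j = Matrix.vecMul (Matrix.vecMul c M⁻¹) M j := by
    simp [pq, Matrix.vecMul, dotProduct, hM, Matrix.map_apply]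
  rw [h2, h1]

/-- if `l + l'_{[k]} ∈ S'` then `x(φ(l)) + l'_{[k]} ∈ S'`, and hence
`w̄(φ(l) + 1_j) > w̄(φ(l))` for every bad vertex `j`. -/
theorem stmt15 (s : ℕ) (B : Matrix (Fin s) (Fin s) ℤ) (hB : Plumbing B)
    (Jb : Finset (Fin s)) (hbad : HasBadSet B Jb)
    (l' : Fin s → ℚ) (hl' : MinClassRep B l')
    (kcan : Fin s → ℚ) (hk : IsCanonical B kcan)
    (X : (Fin s → ℕ) → (Fin s → ℤ)) (hX : ∀ i, IsXcycle B l' Jb i (X i))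
    (l : Fin s → ℤ) (hlS : ∀ j, pq B (l' + castQ l) j ≤ 0)
    (i : Fin s → ℕ) (hi : ∀ j ∈ Jb, (i j : ℤ) = l j) :
    (∀ j, pq B (l' + castQ (X i)) j ≤ 0) ∧
    (∀ j ∈ Jb,
      chi B (krep kcan l') (X i) <
        chi B (krep kcan l') (X (fun t => i t + if t = j then 1 else 0))) := by
  obtain ⟨hsymm, hnd, hoff, _, _⟩ := hB
  have hsB : ∀ a b, B a b = B b a := fun a b => hsymm.apply b a
  obtain ⟨hXi_bad, hXi_off, hXi_min⟩ := hX i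
  -- X i ≤ l pointwise
  have hle : ∀ t, X i t ≤ l t := by
    refine hXi_min l (fun t ht => (hi t ht).symm) (fun t _ => hlS t)
  -- PART 1
  have part1 : ∀ j, pq B (l' + castQ (X i)) j ≤ 0 := by
    intro j
    by_cases hj : j ∈ Jb
    · have e1 : pq B (l' + castQ (X i)) j =
          pq B (l' + castQ l) j + ∑ t, ((X i t : ℚ) - (l t : ℚ)) * (B t j : ℚ) := by
        rw [pq_add, pq_add, pq_castQ, pq_castQ]
        have : (∑ t, ((X i t : ℚ) - (l t : ℚ)) * (B t j : ℚ))
            = (∑ t, (X i t : ℚ) * (B t j : ℚ)) - ∑ t, (l t : ℚ) * (B t j : ℚ) := by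
          rw [← Finset.sum_sub_distrib]
          exact Finset.sum_congr rfl fun t _ => by ring
        rw [this]; ring
      have e2 : (∑ t, ((X i t : ℚ) - (l t : ℚ)) * (B t j : ℚ)) ≤ 0 := by
        refine Finset.sum_nonpos fun t _ => ?_
        by_cases ht : t = j
        · subst ht
          have h1 : X i t = (i t : ℤ) := hXi_bad t hj
          have h2 : (i t : ℤ) = l t := hi t hj
          rw [h1, h2]; simp
        · have hb : (0 : ℚ) ≤ (B t j : ℚ) := by
            rcases hoff t j ht with h | h <;> rw [h] <;> norm_num
          have hd : ((X i t : ℚ) - (l t : ℚ)) ≤ 0 := by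
            have := hle t
            have : (X i t : ℚ) ≤ (l t : ℚ) := by exact_mod_cast this
            linarith
          exact mul_nonpos_of_nonpos_of_nonneg hd hb
      calc pq B (l' + castQ (X i)) j
          = pq B (l' + castQ l) j + ∑ t, ((X i t : ℚ) - (l t : ℚ)) * (B t j : ℚ) := e1
        _ ≤ 0 + 0 := add_le_add (hlS j) e2
        _ = 0 := by ring
    · exact hXi_off j hj
  refine ⟨part1, ?_⟩
  -- PART 2
  intro j hj
  obtain ⟨B', hB'off, hB'diagoff, hB'diagbad, hB'rat⟩ := hbad
  have hsB' : ∀ a b, B' a b = B' b a := by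
    intro a b
    by_cases h : a = b
    · subst h; rfl
    · rw [hB'off a b h, hB'off b a (Ne.symm h), hsB a b]
  have hB'diagle : ∀ t, B' t t ≤ B t t := by
    intro t
    by_cases ht : t ∈ Jb
    · exact hB'diagbad t ht
    · exact le_of_eq (hB'diagoff t ht)
  -- B' is negative definite
  have hnd' : NegDef B' := by
    intro x hx
    have hdiff : pairQ B x x - pairQ B' x x = ∑ t, x t * ((B t t : ℚ) - (B' t t : ℚ)) * x t := by
      rw [pairQ, pairQ, ← Finset.sum_sub_distrib]
      refine Finset.sum_congr rfl fun a _ => ?_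
      rw [← Finset.sum_sub_distrib]
      rw [Finset.sum_eq_single a]
      · ring
      · intro b _ hb
        rw [hB'off a b (fun h => hb (h.symm ▸ rfl))]
        ring
      · intro h; exact absurd (Finset.mem_univ a) h
    have hnn : 0 ≤ ∑ t, x t * ((B t t : ℚ) - (B' t t : ℚ)) * x t := by
      refine Finset.sum_nonneg fun t _ => ?_
      have h1 : (0 : ℚ) ≤ (B t t : ℚ) - (B' t t : ℚ) := by
        have := hB'diagle t
        have : (B' t t : ℚ) ≤ (B t t : ℚ) := by exact_mod_cast this
        linarith
      have : x t * ((B t t : ℚ) - (B' t t : ℚ)) * x t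
          = ((B t t : ℚ) - (B' t t : ℚ)) * (x t * x t) := by ring
      rw [this]
      exact mul_nonneg h1 (mul_self_nonneg _)
    have := hnd x hx
    linarith
  obtain ⟨kc', hk'⟩ := exists_canonical B' hnd'
  set i' : Fin s → ℕ := fun t => i t + if t = j then 1 else 0 with hi'def
  obtain ⟨hX'_bad, hX'_off, _⟩ := hX i'
  set wZ : Fin s → ℤ := fun t => X i' t - X i t with hwZdef
  -- the competitor X i' - E_j
  set yy : Fin s → ℤ := fun t => X i' t - (if t = j then 1 else 0) with hyydef
  have h_yy_bad : ∀ t ∈ Jb, yy t = (i t : ℤ) := by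
    intro t ht
    have h1 := hX'_bad t ht
    simp only [hyydef, hi'def] at h1 ⊢
    rw [h1]
    by_cases h : t = j <;> simp [h]
  have h_yy_off : ∀ t, t ∉ Jb → pq B (l' + castQ yy) t ≤ 0 := by
    intro t ht
    have hcast : castQ yy = castQ (X i') + (fun u => -(if u = j then (1:ℚ) else 0)) := by
      funext u
      simp only [castQ, hyydef, Pi.add_apply]
      by_cases h : u = j <;> simp [h] <;> push_cast <;> ring
    have e1 : pq B (l' + castQ yy) t
        = pq B (l' + castQ (X i')) t + pq B (fun u => -(if u = j then (1:ℚ) else 0)) t := by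
      rw [show l' + castQ yy = (l' + castQ (X i')) + (fun u => -(if u = j then (1:ℚ) else 0)) by
        rw [hcast]; funext u; simp; ring]
      rw [pq_add]
    have e2 : pq B (fun u => -(if u = j then (1:ℚ) else 0)) t = -(B j t : ℚ) := by
      simp [pq, ite_mul, neg_mul]
    have e3 : (0 : ℚ) ≤ (B j t : ℚ) := by
      have hne : j ≠ t := fun h => ht (h ▸ hj)
      rcases hoff j t hne with h | h <;> rw [h] <;> norm_num
    have := hX'_off t ht
    rw [e1, e2]
    linarith
  have hmin' : ∀ t, X i t ≤ yy t := hXi_min yy h_yy_bad h_yy_off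
  -- properties of wZ
  have hwZ_bad : ∀ t ∈ Jb, wZ t = if t = j then 1 else 0 := by
    intro t ht
    have h1 := hX'_bad t ht
    have h2 := hXi_bad t ht
    simp only [hwZdef, hi'def] at h1 ⊢
    rw [h1, h2]
    by_cases h : t = j <;> simp [h]
  have hwZ_nonneg : ∀ t, 0 ≤ wZ t := by
    intro t
    have h1 := hmin' t
    simp only [hyydef] at h1
    simp only [hwZdef]
    by_cases h : t = j <;> simp [h] at h1 ⊢ <;> omega
  have hwZ_ne : wZ ≠ 0 := by
    intro h
    have h1 := congrFun h j
    have h2 := hwZ_bad j hj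
    simp at h2
    rw [h2] at h1
    simp at h1
  -- key chi identity
  have hXsplit : X i' = X i + wZ := by
    funext t; simp only [hwZdef, Pi.add_apply]; ring
  have hkr : krep kcan l' = kcan + (fun u => 2 * l' u) := rfl
  have hchi : chi B (krep kcan l') (X i')
      = chi B (krep kcan l') (X i) + chi B kcan wZ
        - pairQ B (l' + castQ (X i)) (castQ wZ) := by
    rw [hXsplit, chi_step hsB, hkr, pairQ_add_right, pairQ_smul_right]
    rw [pairQ_symm' hsB (castQ wZ) l', pairQ_add_left]
    simp only [chi, pairQ_add_right]
    ring
  -- chi B kcan wZ = chi B' kc' wZ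
  have h1 : pairQ B (castQ wZ) kcan = ∑ t, (-(B t t : ℚ) - 2) * (wZ t : ℚ) := by
    rw [pairQ_symm' hsB, pairQ_eq_sum_pq]
    exact Finset.sum_congr rfl fun t _ => by rw [hk t]; rfl
  have h2 : pairQ B' (castQ wZ) kc' = ∑ t, (-(B' t t : ℚ) - 2) * (wZ t : ℚ) := by
    rw [pairQ_symm' hsB', pairQ_eq_sum_pq]
    exact Finset.sum_congr rfl fun t _ => by rw [hk' t]; rfl
  have h3 : pairQ B (castQ wZ) (castQ wZ) = pairQ B' (castQ wZ) (castQ wZ)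
      + ∑ t, ((B t t : ℚ) - (B' t t : ℚ)) * (wZ t : ℚ) * (wZ t : ℚ) := by
    have : pairQ B (castQ wZ) (castQ wZ) - pairQ B' (castQ wZ) (castQ wZ)
        = ∑ t, ((B t t : ℚ) - (B' t t : ℚ)) * (wZ t : ℚ) * (wZ t : ℚ) := by
      rw [pairQ, pairQ, ← Finset.sum_sub_distrib]
      refine Finset.sum_congr rfl fun a _ => ?_
      rw [← Finset.sum_sub_distrib]
      rw [Finset.sum_eq_single a]
      · show castQ wZ a * _ * castQ wZ a - castQ wZ a * _ * castQ wZ a = _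
        simp only [castQ]
        ring
      · intro b _ hb
        rw [hB'off a b (fun h => hb (h.symm ▸ rfl))]
        ring
      · intro h; exact absurd (Finset.mem_univ a) h
    linarith
  have hzero : ∀ t, ((B t t : ℚ) - (B' t t : ℚ)) * ((wZ t : ℚ) * (wZ t : ℚ) - (wZ t : ℚ)) = 0 := by
    intro t
    by_cases ht : t ∈ Jb
    · have hw := hwZ_bad t ht
      have hw2 : (wZ t : ℚ) = if t = j then 1 else 0 := by
        rw [hw]; by_cases h : t = j <;> simp [h]
      rw [hw2]
      by_cases h : t = j <;> simp [h]
    · rw [hB'diagoff t ht]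
      ring
  have hsums : (∑ t, ((B t t : ℚ) - (B' t t : ℚ)) * (wZ t : ℚ) * (wZ t : ℚ))
      + (∑ t, (-(B t t : ℚ) - 2) * (wZ t : ℚ))
      = ∑ t, (-(B' t t : ℚ) - 2) * (wZ t : ℚ) := by
    rw [← Finset.sum_add_distrib]
    refine Finset.sum_congr rfl fun t _ => ?_
    linear_combination hzero t
  have hEqchi : chi B kcan wZ = chi B' kc' wZ := by
    simp only [chi, pairQ_add_right]
    rw [h1, h2, h3]
    linarith [hsums]
  -- positivity
  have hpos : 0 < chi B kcan wZ := by
    rw [hEqchi]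
    exact hB'rat kc' hk' wZ hwZ_nonneg hwZ_ne
  have hpair : pairQ B (l' + castQ (X i)) (castQ wZ) ≤ 0 := by
    rw [pairQ_eq_sum_pq]
    refine Finset.sum_nonpos fun t _ => ?_
    have h1 : (0 : ℚ) ≤ castQ wZ t := by
      have := hwZ_nonneg t
      simp only [castQ]
      exact_mod_cast this
    exact mul_nonpos_of_nonpos_of_nonneg (part1 t) h1
  rw [hchi]
  linarith
end
end
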